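/- Let N ≥ 2 be an integer, 0<s<1 with N>2s, let 0 < γ < (N-2s)/2 and let 0 < θ < N − 2s − 2γ. Then the function σ ↦ K(σ) (σ^θ − 1)(σ^{N−γ−θ−1} − σ^{2s+γ−1}) is integrable on (1,∞) and its integral is strictly positive: 0 < ∫_1^∞ K(σ) (σ^θ − 1)(σ^{N−γ−θ−1} − σ^{2s+γ−1}) dσ < ∞. -/
import Mathlib


open MeasureTheory Real Filter

noncomputable section

/-- The spherical kernel
`K(σ) = (2 π^{(N-1)/2} / Γ((N-1)/2)) ∫_0^π sin^{N-2}(η) (1 − 2σ cos η + σ²)^{-(N+2s)/2} dη`. -/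
def sphericalKernel (N : ℕ) (s σ : ℝ) : ℝ :=
  2 * Real.pi ^ (((N : ℝ) - 1) / 2) / Real.Gamma (((N : ℝ) - 1) / 2) *
    ∫ η in (0 : ℝ)..Real.pi,
      Real.sin η ^ (N - 2) * (1 - 2 * σ * Real.cos η + σ ^ 2) ^ (-(((N : ℝ) + 2 * s) / 2))

namespace SKaux

lemma base_ge {σ η : ℝ} (hσ : 1 ≤ σ) :
    (σ - 1) ^ 2 ≤ 1 - 2 * σ * Real.cos η + σ ^ 2 := by
  nlinarith [Real.cos_le_one η]

lemma base_pos {σ : ℝ} (hσ : 1 < σ) (η : ℝ) :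
    0 < 1 - 2 * σ * Real.cos η + σ ^ 2 :=
  lt_of_lt_of_le (by nlinarith) (base_ge hσ.le)

lemma base_ge' {σ η : ℝ} (hσ : 1 ≤ σ) (h0 : 0 ≤ η) (hπ : η ≤ π) :
    (2 / 5) * η ^ 2 ≤ 1 - 2 * σ * Real.cos η + σ ^ 2 := by
  have h1 : Real.cos η ≤ 1 - 2 / π ^ 2 * η ^ 2 :=
    Real.cos_le_one_sub_mul_cos_sq (by rwa [abs_of_nonneg h0])
  have hpi : π < 3.15 := Real.pi_lt_d2
  have hpi0 : 0 < π := Real.pi_pos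
  have hsq : π ^ 2 < 10 := by nlinarith
  have h2 : (1 / 5 : ℝ) * η ^ 2 ≤ 2 / π ^ 2 * η ^ 2 := by
    have : (1 / 5 : ℝ) ≤ 2 / π ^ 2 := by
      rw [div_le_div_iff₀ (by norm_num) (by positivity)]
      nlinarith
    exact mul_le_mul_of_nonneg_right this (sq_nonneg η)
  nlinarith [sq_nonneg (σ - 1)]

lemma rpow_sub_one_le {σ c : ℝ} (hσ : 1 ≤ σ) (hc : 0 ≤ c) :
    σ ^ c - 1 ≤ c * (σ - 1) * σ ^ c := by
  have h0 : 0 < σ := by linarith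
  have hlog : Real.log σ ≤ σ - 1 := Real.log_le_sub_one_of_pos h0
  have hlog0 : 0 ≤ Real.log σ := Real.log_nonneg hσ
  set x := c * Real.log σ with hx
  have hrw : σ ^ c = Real.exp x := by
    rw [Real.rpow_def_of_pos h0, hx, mul_comm]
  have hx0 : 0 ≤ x := mul_nonneg hc hlog0
  have hxle : x ≤ c * (σ - 1) := mul_le_mul_of_nonneg_left hlog hc
  have h1 : -x + 1 ≤ Real.exp (-x) := Real.add_one_le_exp (-x)
  have h2 : Real.exp (-x) * Real.exp x = 1 := by
    rw [← Real.exp_add]; simp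
  have h3 : 0 < Real.exp x := Real.exp_pos x
  have h4 : (1 - x) * Real.exp x ≤ 1 := by nlinarith [mul_le_mul_of_nonneg_right h1 h3.le]
  have h5 : x * Real.exp x ≤ c * (σ - 1) * Real.exp x := mul_le_mul_of_nonneg_right hxle h3.le
  rw [hrw]
  nlinarith

lemma cont_integrand {σ : ℝ} (hσ : 1 < σ) (n : ℕ) (q : ℝ) :
    Continuous fun η : ℝ => Real.sin η ^ n * (1 - 2 * σ * Real.cos η + σ ^ 2) ^ q :=
  (Real.continuous_sin.pow n).mul <|
    Continuous.rpow_const (by continuity) fun η => Or.inl (base_pos hσ η).ne'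

lemma Kint_pos {σ : ℝ} (hσ : 1 < σ) (n : ℕ) (q : ℝ) :
    0 < ∫ η in (0:ℝ)..π, Real.sin η ^ n * (1 - 2 * σ * Real.cos η + σ ^ 2) ^ q :=
  intervalIntegral.intervalIntegral_pos_of_pos_on
    ((cont_integrand hσ n q).intervalIntegrable _ _)
    (fun η hη => mul_pos (pow_pos (Real.sin_pos_of_pos_of_lt_pi hη.1 hη.2) n)
      (Real.rpow_pos_of_pos (base_pos hσ η) q))
    Real.pi_pos

lemma meas_kernel (N : ℕ) (s : ℝ) : Measurable fun σ => sphericalKernel N s σ := by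
  unfold sphericalKernel
  apply Measurable.const_mul
  have heq : (fun σ : ℝ => ∫ η in (0:ℝ)..π,
        Real.sin η ^ (N-2) * (1 - 2 * σ * Real.cos η + σ ^ 2) ^ (-(((N:ℝ) + 2*s)/2)))
      = fun σ : ℝ => ∫ η in Set.Ioc (0:ℝ) π,
        Real.sin η ^ (N-2) * (1 - 2 * σ * Real.cos η + σ ^ 2) ^ (-(((N:ℝ) + 2*s)/2)) ∂volume :=
    funext fun σ => intervalIntegral.integral_of_le Real.pi_pos.le
  rw [heq]
  exact (MeasureTheory.StronglyMeasurable.integral_prod_right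
    (f := fun σ η : ℝ => Real.sin η ^ (N-2) * (1 - 2 * σ * Real.cos η + σ ^ 2) ^ (-(((N:ℝ) + 2*s)/2)))
    (Measurable.stronglyMeasurable (by fun_prop))).measurable

lemma Kint_le_far {N : ℕ} {s σ : ℝ} (hN2 : 2 ≤ N) (hs0 : 0 < s) (h2 : 2 ≤ σ) :
    (∫ η in (0:ℝ)..π, Real.sin η ^ (N-2) * (1 - 2*σ*Real.cos η + σ^2) ^ (-(((N:ℝ)+2*s)/2)))
      ≤ π * 4 ^ (((N:ℝ)+2*s)/2) * σ ^ (-((N:ℝ)+2*s)) := by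
  have hNR : (2:ℝ) ≤ (N:ℝ) := by exact_mod_cast hN2
  set p := ((N:ℝ)+2*s)/2 with hp
  have hp0 : 0 < p := by rw [hp]; linarith
  have hσ1 : 1 < σ := by linarith
  have hσ0 : 0 < σ := by linarith
  have hbd : ∀ η ∈ Set.Icc (0:ℝ) π,
      Real.sin η ^ (N-2) * (1-2*σ*Real.cos η+σ^2)^(-p) ≤ 4^p * σ^(-((N:ℝ)+2*s)) := by
    intro η hη
    have h1 : Real.sin η ^ (N-2) ≤ 1 :=
      pow_le_one₀ (Real.sin_nonneg_of_nonneg_of_le_pi hη.1 hη.2) (Real.sin_le_one η)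
    have hb : σ^2/4 ≤ 1-2*σ*Real.cos η+σ^2 := le_trans (by nlinarith) (base_ge hσ1.le)
    have h2' : (1-2*σ*Real.cos η+σ^2)^(-p) ≤ (σ^2/4)^(-p) :=
      Real.rpow_le_rpow_of_nonpos (by positivity) hb (by linarith)
    have e1 : ((σ:ℝ)^2) ^ (-p) = σ ^ (-((N:ℝ)+2*s)) := by
      rw [← Real.rpow_natCast σ 2, ← Real.rpow_mul hσ0.le]
      congr 1; push_cast [hp]; ring
    have h3 : ((σ:ℝ)^2/4)^(-p) = 4^p * σ^(-((N:ℝ)+2*s)) := by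
      rw [Real.div_rpow (by positivity) (by norm_num), Real.rpow_neg (by norm_num : (0:ℝ) ≤ 4),
        div_eq_mul_inv, inv_inv, e1, mul_comm]
    calc Real.sin η ^ (N-2) * (1-2*σ*Real.cos η+σ^2)^(-p)
        ≤ 1 * (4^p * σ^(-((N:ℝ)+2*s))) :=
          mul_le_mul h1 (h2'.trans_eq h3) (Real.rpow_nonneg (base_pos hσ1 η).le _) one_pos.le
      _ = 4^p * σ^(-((N:ℝ)+2*s)) := one_mul _
  calc (∫ η in (0:ℝ)..π, Real.sin η ^ (N-2) * (1-2*σ*Real.cos η+σ^2)^(-p))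
      ≤ ∫ _η in (0:ℝ)..π, 4^p * σ^(-((N:ℝ)+2*s)) :=
        intervalIntegral.integral_mono_on Real.pi_pos.le
          ((cont_integrand hσ1 _ _).intervalIntegrable _ _)
          intervalIntegrable_const hbd
    _ = π * 4^p * σ^(-((N:ℝ)+2*s)) := by
        rw [intervalIntegral.integral_const]; simp [smul_eq_mul]; ring

lemma Kint_le_near {N : ℕ} {s σ : ℝ} (hN2 : 2 ≤ N) (hs0 : 0 < s) (h1 : 1 < σ) (h2 : σ ≤ 2) :
    (∫ η in (0:ℝ)..π, Real.sin η ^ (N-2) * (1 - 2*σ*Real.cos η + σ^2) ^ (-(((N:ℝ)+2*s)/2)))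
      ≤ (1/((N:ℝ)-1) + (5/2) ^ (((N:ℝ)+2*s)/2) / (1+2*s)) * (σ-1) ^ (-(1+2*s)) := by
  have hNR : (2:ℝ) ≤ (N:ℝ) := by exact_mod_cast hN2
  set p := ((N:ℝ)+2*s)/2 with hp
  have hp0 : 0 < p := by rw [hp]; linarith
  set t := σ - 1 with htdef
  have ht0 : 0 < t := by rw [htdef]; linarith
  have ht1 : t ≤ 1 := by rw [htdef]; linarith
  have htπ : t ≤ π := ht1.trans (by linarith [Real.pi_gt_three])
  have hg : Continuous fun η : ℝ => Real.sin η ^ (N-2) * (1-2*σ*Real.cos η+σ^2)^(-p) :=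
    cont_integrand h1 _ _
  have hsplit : (∫ η in (0:ℝ)..π, Real.sin η ^ (N-2) * (1-2*σ*Real.cos η+σ^2)^(-p))
      = (∫ η in (0:ℝ)..t, Real.sin η ^ (N-2) * (1-2*σ*Real.cos η+σ^2)^(-p))
        + (∫ η in t..π, Real.sin η ^ (N-2) * (1-2*σ*Real.cos η+σ^2)^(-p)) :=
    (intervalIntegral.integral_add_adjacent_intervals (hg.intervalIntegrable _ _)
      (hg.intervalIntegrable _ _)).symm
  have hb1 : (∫ η in (0:ℝ)..t, Real.sin η ^ (N-2) * (1-2*σ*Real.cos η+σ^2)^(-p))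
      ≤ 1/((N:ℝ)-1) * t^(-(1+2*s)) := by
    have hmono : ∀ η ∈ Set.Icc (0:ℝ) t,
        Real.sin η ^ (N-2) * (1-2*σ*Real.cos η+σ^2)^(-p) ≤ η^(N-2) * t^(-((N:ℝ)+2*s)) := by
      intro η hη
      have hηπ : η ≤ π := hη.2.trans htπ
      have hsin : Real.sin η ^ (N-2) ≤ η ^ (N-2) :=
        pow_le_pow_left₀ (Real.sin_nonneg_of_nonneg_of_le_pi hη.1 hηπ) (Real.sin_le hη.1) _
      have hbase : (t^2 : ℝ) ≤ 1-2*σ*Real.cos η+σ^2 := base_ge h1.le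
      have h2' : (1-2*σ*Real.cos η+σ^2)^(-p) ≤ (t^2)^(-p) :=
        Real.rpow_le_rpow_of_nonpos (by positivity) hbase (by linarith)
      have h3 : ((t:ℝ)^2)^(-p) = t^(-((N:ℝ)+2*s)) := by
        rw [← Real.rpow_natCast t 2, ← Real.rpow_mul ht0.le]
        congr 1; push_cast [hp]; ring
      exact mul_le_mul hsin (h2'.trans_eq h3) (Real.rpow_nonneg (base_pos h1 η).le _)
        (pow_nonneg hη.1 _)
    have hint : (∫ η in (0:ℝ)..t, Real.sin η ^ (N-2) * (1-2*σ*Real.cos η+σ^2)^(-p))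
        ≤ ∫ η in (0:ℝ)..t, η^(N-2) * t^(-((N:ℝ)+2*s)) :=
      intervalIntegral.integral_mono_on ht0.le (hg.intervalIntegrable _ _)
        (((continuous_pow _).mul continuous_const).intervalIntegrable _ _) hmono
    have hpow : (∫ η in (0:ℝ)..t, η^(N-2) : ℝ) = t^(N-1 : ℕ)/((N:ℝ)-1) := by
      rw [integral_pow, show (N-2)+1 = N-1 from by omega,
        zero_pow (show N-1 ≠ 0 by omega)]
      congr 1
      · ring
      · rw [Nat.cast_sub hN2]; push_cast; ring
    have hfin : (t:ℝ)^(N-1 : ℕ) * t^(-((N:ℝ)+2*s)) = t^(-(1+2*s)) := by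
      rw [← Real.rpow_natCast t (N-1), ← Real.rpow_add ht0]
      congr 1
      rw [Nat.cast_sub (show 1 ≤ N by omega)]
      push_cast; ring
    calc (∫ η in (0:ℝ)..t, Real.sin η ^ (N-2) * (1-2*σ*Real.cos η+σ^2)^(-p))
        ≤ ∫ η in (0:ℝ)..t, η^(N-2) * t^(-((N:ℝ)+2*s)) := hint
      _ = t^(N-1 : ℕ)/((N:ℝ)-1) * t^(-((N:ℝ)+2*s)) := by
          rw [intervalIntegral.integral_mul_const, hpow]
      _ = 1/((N:ℝ)-1) * t^(-(1+2*s)) := by rw [div_mul_eq_mul_div, hfin]; ring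
  have hb2 : (∫ η in t..π, Real.sin η ^ (N-2) * (1-2*σ*Real.cos η+σ^2)^(-p))
      ≤ (5/2)^p/(1+2*s) * t^(-(1+2*s)) := by
    have hnot0 : (0:ℝ) ∉ Set.uIcc t π := by
      intro hmem
      rw [Set.uIcc_of_le htπ, Set.mem_Icc] at hmem
      linarith [hmem.1]
    have hrint : IntervalIntegrable (fun η : ℝ => (5/2)^p * η^(-(2+2*s))) volume t π :=
      (intervalIntegral.intervalIntegrable_rpow (Or.inr hnot0)).const_mul _
    have hmono : ∀ η ∈ Set.Icc t π,
        Real.sin η ^ (N-2) * (1-2*σ*Real.cos η+σ^2)^(-p) ≤ (5/2)^p * η^(-(2+2*s)) := by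
      intro η hη
      have hη0 : 0 < η := lt_of_lt_of_le ht0 hη.1
      have hsin : Real.sin η ^ (N-2) ≤ η ^ (N-2) :=
        pow_le_pow_left₀ (Real.sin_nonneg_of_nonneg_of_le_pi hη0.le hη.2) (Real.sin_le hη0.le) _
      have hbase : (2/5)*η^2 ≤ 1-2*σ*Real.cos η+σ^2 := base_ge' h1.le hη0.le hη.2
      have h2' : (1-2*σ*Real.cos η+σ^2)^(-p) ≤ ((2/5)*η^2)^(-p) :=
        Real.rpow_le_rpow_of_nonpos (by positivity) hbase (by linarith)
      have e1 : ((2/5 : ℝ))^(-p) = (5/2)^p := by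
        rw [Real.rpow_neg (by norm_num), ← Real.inv_rpow (by norm_num)]
        norm_num
      have e2 : ((η:ℝ)^2)^(-p) = η^(-(2*p)) := by
        rw [← Real.rpow_natCast η 2, ← Real.rpow_mul hη0.le]
        congr 1; push_cast; ring
      have h3 : (((2:ℝ)/5)*η^2)^(-p) = (5/2)^p * η^(-(2*p)) := by
        rw [Real.mul_rpow (by norm_num) (by positivity), e1, e2]
      have h4 : (η:ℝ)^(N-2 : ℕ) * η^(-(2*p)) = η^(-(2+2*s)) := by
        rw [← Real.rpow_natCast η (N-2), ← Real.rpow_add hη0]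
        congr 1
        rw [Nat.cast_sub hN2]
        push_cast [hp]; ring
      calc Real.sin η ^ (N-2) * (1-2*σ*Real.cos η+σ^2)^(-p)
          ≤ η^(N-2) * ((5/2)^p * η^(-(2*p))) := by
            refine mul_le_mul hsin (h2'.trans_eq h3) (Real.rpow_nonneg (base_pos h1 η).le _) ?_
            positivity
        _ = (5/2)^p * (η^(N-2 : ℕ) * η^(-(2*p))) := by ring
        _ = (5/2)^p * η^(-(2+2*s)) := by rw [h4]
    have hint2 : (∫ η in t..π, Real.sin η ^ (N-2) * (1-2*σ*Real.cos η+σ^2)^(-p))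
        ≤ ∫ η in t..π, (5/2)^p * η^(-(2+2*s)) :=
      intervalIntegral.integral_mono_on htπ (hg.intervalIntegrable _ _) hrint hmono
    have hne : -(2+2*s) ≠ -1 := by intro h; linarith
    have hcomp : (∫ η in t..π, η^(-(2+2*s)) : ℝ) ≤ t^(-(1+2*s))/(1+2*s) := by
      rw [integral_rpow (Or.inr ⟨hne, hnot0⟩)]
      have he : -(2+2*s)+1 = -(1+2*s) := by ring
      rw [he]
      have hππ : 0 ≤ π^(-(1+2*s)) := Real.rpow_nonneg Real.pi_pos.le _
      have h12s : (0:ℝ) < 1+2*s := by linarith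
      have key : (π ^ (-(1+2*s)) - t ^ (-(1+2*s))) / (-(1+2*s))
          = (t^(-(1+2*s)) - π^(-(1+2*s)))/(1+2*s) := by
        rw [div_neg, ← neg_div, neg_sub]
      rw [key]
      gcongr
      linarith
    calc (∫ η in t..π, Real.sin η ^ (N-2) * (1-2*σ*Real.cos η+σ^2)^(-p))
        ≤ ∫ η in t..π, (5/2)^p * η^(-(2+2*s)) := hint2
      _ = (5/2)^p * ∫ η in t..π, η^(-(2+2*s)) := by
          rw [intervalIntegral.integral_const_mul]
      _ ≤ (5/2)^p * (t^(-(1+2*s))/(1+2*s)) :=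
          mul_le_mul_of_nonneg_left hcomp (Real.rpow_nonneg (by norm_num) _)
      _ = (5/2)^p/(1+2*s) * t^(-(1+2*s)) := by ring
  rw [hsplit]
  calc _ ≤ 1/((N:ℝ)-1) * t^(-(1+2*s)) + (5/2)^p/(1+2*s) * t^(-(1+2*s)) := add_le_add hb1 hb2
    _ = (1/((N:ℝ)-1) + (5/2)^p/(1+2*s)) * t^(-(1+2*s)) := by ring

end SKaux

/-- The function `σ ↦ K(σ)(σ^θ − 1)(σ^{N−γ−θ−1} − σ^{2s+γ−1})` is integrable on `(1,∞)` and
its integral is strictly positive (this integral is `C(N,s,γ,θ)/a_{N,s}`, where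
`L_{γ,ℝ^N}(|·|^{-θ}) = C |x|^{-θ-2s-2γ}`). -/
theorem sphericalKernel_integral_pos (N : ℕ) (s γ θ : ℝ) (hN2 : 2 ≤ N) (hs0 : 0 < s)
    (hs1 : s < 1) (hN : 2 * s < (N : ℝ)) (hγ0 : 0 < γ) (hγ : γ < ((N : ℝ) - 2 * s) / 2)
    (hθ0 : 0 < θ) (hθ : θ < (N : ℝ) - 2 * s - 2 * γ) :
    IntegrableOn
      (fun σ : ℝ => sphericalKernel N s σ * (σ ^ θ - 1) *
        (σ ^ ((N : ℝ) - γ - θ - 1) - σ ^ (2 * s + γ - 1)))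
      (Set.Ioi (1 : ℝ)) ∧
    0 < ∫ σ in Set.Ioi (1 : ℝ), sphericalKernel N s σ * (σ ^ θ - 1) *
        (σ ^ ((N : ℝ) - γ - θ - 1) - σ ^ (2 * s + γ - 1)) := by
  have hNR : (2:ℝ) ≤ (N:ℝ) := by exact_mod_cast hN2
  set a := (N:ℝ) - γ - θ - 1 with ha
  set b := 2*s + γ - 1 with hb
  have hba : b < a := by rw [ha, hb]; linarith
  set p := ((N:ℝ)+2*s)/2 with hp
  set pref := 2 * Real.pi ^ (((N : ℝ) - 1) / 2) / Real.Gamma (((N : ℝ) - 1) / 2) with hpref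
  have hpref0 : 0 < pref := by
    apply div_pos (by positivity)
    exact Real.Gamma_pos_of_pos (by linarith)
  set f := fun σ : ℝ => sphericalKernel N s σ * (σ ^ θ - 1) * (σ ^ a - σ ^ b) with hf
  have hker : ∀ σ : ℝ, sphericalKernel N s σ
      = pref * ∫ η in (0:ℝ)..π,
          Real.sin η ^ (N-2) * (1 - 2 * σ * Real.cos η + σ ^ 2)^(-p) := fun σ => rfl
  have hfpos : ∀ σ ∈ Set.Ioi (1:ℝ), 0 < f σ := by
    intro σ hσ
    have hσ1 : 1 < σ := hσ
    have hσ0 : 0 < σ := by linarith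
    have hK : 0 < sphericalKernel N s σ := by
      rw [hker]
      exact mul_pos hpref0 (SKaux.Kint_pos hσ1 _ _)
    have hX : 0 < σ ^ θ - 1 := by
      rw [sub_pos]
      exact (Real.one_lt_rpow_iff_of_pos hσ0).mpr (Or.inl ⟨hσ1, hθ0⟩)
    have hY : 0 < σ ^ a - σ ^ b := by
      rw [sub_pos]
      exact (Real.rpow_lt_rpow_left_iff hσ1).mpr hba
    exact mul_pos (mul_pos hK hX) hY
  have hmeasf : Measurable f :=
    ((SKaux.meas_kernel N s).mul (by fun_prop)).mul (by fun_prop)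
  have hnear : IntegrableOn f (Set.Ioc (1:ℝ) 2) := by
    set D := 1/((N:ℝ)-1) + (5/2)^p/(1+2*s) with hD
    have hD0 : 0 ≤ D := by
      apply add_nonneg
      · exact div_nonneg zero_le_one (by linarith)
      · positivity
    set Ma := (2:ℝ)^(max a 0) with hMa
    set C1 := pref * D * (θ * 2^θ) * ((a-b) * Ma) with hC1
    apply Integrable.mono' (g := fun σ => C1 * (σ-1)^(1-2*s))
    · have h0 : IntervalIntegrable (fun x : ℝ => x^(1-2*s)) volume 0 1 :=
        intervalIntegral.intervalIntegrable_rpow' (by linarith)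
      have h1 : IntervalIntegrable (fun x : ℝ => (x-1)^(1-2*s)) volume 1 2 := by
        have h2' := h0.comp_sub_right 1
        norm_num at h2'
        exact h2'
      have h3 := h1.const_mul C1
      rwa [intervalIntegrable_iff_integrableOn_Ioc_of_le one_le_two] at h3
    · exact hmeasf.aestronglyMeasurable.restrict
    · filter_upwards [ae_restrict_mem measurableSet_Ioc] with σ hσ
      obtain ⟨hσ1, hσ2⟩ := hσ
      have hσ0 : 0 < σ := by linarith
      have ht0 : 0 < σ - 1 := by linarith
      rw [Real.norm_eq_abs, abs_of_nonneg (hfpos σ hσ1).le]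
      have hK : sphericalKernel N s σ ≤ pref * (D * (σ-1)^(-(1+2*s))) := by
        rw [hker]
        have := mul_le_mul_of_nonneg_left (SKaux.Kint_le_near hN2 hs0 hσ1 hσ2) hpref0.le
        calc pref * ∫ η in (0:ℝ)..π,
              Real.sin η ^ (N-2) * (1 - 2 * σ * Real.cos η + σ ^ 2)^(-p)
            ≤ pref * ((1/((N:ℝ)-1) + (5/2) ^ p / (1+2*s)) * (σ-1) ^ (-(1+2*s))) := this
          _ = pref * (D * (σ-1)^(-(1+2*s))) := by rw [hD]
      have hXle : σ^θ - 1 ≤ θ * (σ-1) * 2^θ := by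
        have h := SKaux.rpow_sub_one_le hσ1.le hθ0.le
        have h2' : σ^θ ≤ 2^θ := Real.rpow_le_rpow hσ0.le hσ2 hθ0.le
        calc σ^θ - 1 ≤ θ*(σ-1)*σ^θ := h
          _ ≤ θ*(σ-1)*2^θ := by
              apply mul_le_mul_of_nonneg_left h2'
              exact mul_nonneg hθ0.le ht0.le
      have hYle : σ^a - σ^b ≤ (a-b) * (σ-1) * Ma := by
        have hfact : σ^a - σ^b = σ^b * (σ^(a-b) - 1) := by
          rw [mul_sub, mul_one, ← Real.rpow_add hσ0]; ring_nf
        have h := SKaux.rpow_sub_one_le hσ1.le (by linarith : (0:ℝ) ≤ a - b)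
        have hσa : σ^a ≤ Ma := by
          calc σ^a ≤ σ^(max a 0) := Real.rpow_le_rpow_of_exponent_le hσ1.le (le_max_left _ _)
            _ ≤ 2^(max a 0) := Real.rpow_le_rpow hσ0.le hσ2 (le_max_right _ _)
        calc σ^a - σ^b = σ^b * (σ^(a-b) - 1) := hfact
          _ ≤ σ^b * ((a-b)*(σ-1)*σ^(a-b)) :=
              mul_le_mul_of_nonneg_left h (Real.rpow_nonneg hσ0.le _)
          _ = (a-b)*(σ-1)*(σ^b * σ^(a-b)) := by ring
          _ = (a-b)*(σ-1)*σ^a := by rw [← Real.rpow_add hσ0]; ring_nf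
          _ ≤ (a-b)*(σ-1)*Ma := by
              apply mul_le_mul_of_nonneg_left hσa
              exact mul_nonneg (by linarith) ht0.le
      have hX0 : 0 ≤ σ^θ - 1 := by
        have := (Real.one_lt_rpow_iff_of_pos hσ0).mpr (Or.inl ⟨hσ1, hθ0⟩)
        linarith
      have hR1 : 0 ≤ pref * (D * (σ-1)^(-(1+2*s))) :=
        mul_nonneg hpref0.le (mul_nonneg hD0 (Real.rpow_nonneg ht0.le _))
      have hR2 : 0 ≤ θ*(σ-1)*2^θ :=
        mul_nonneg (mul_nonneg hθ0.le ht0.le) (Real.rpow_nonneg (by norm_num) _)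
      have hY0 : 0 ≤ σ^a - σ^b := by
        have := (Real.rpow_lt_rpow_left_iff hσ1).mpr hba
        linarith
      calc f σ = sphericalKernel N s σ * (σ^θ-1) * (σ^a - σ^b) := rfl
        _ ≤ (pref * (D*(σ-1)^(-(1+2*s)))) * (θ*(σ-1)*2^θ) * ((a-b)*(σ-1)*Ma) := by
            apply mul_le_mul _ hYle hY0 (mul_nonneg hR1 hR2)
            exact mul_le_mul hK hXle hX0 hR1
        _ = C1 * ((σ-1)^(-(1+2*s)) * ((σ-1)*(σ-1))) := by rw [hC1]; ring
        _ = C1 * (σ-1)^(1-2*s) := by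
            congr 1
            rw [show (σ-1)*(σ-1) = (σ-1)^(2:ℕ) by ring, ← Real.rpow_natCast (σ-1) 2,
              ← Real.rpow_add ht0]
            congr 1
            push_cast
            ring
  have hfar : IntegrableOn f (Set.Ioi (2:ℝ)) := by
    set C2 := pref * (π * 4^p) with hC2
    apply Integrable.mono' (g := fun σ => C2 * σ^(-(1+2*s+γ)))
    · exact (integrableOn_Ioi_rpow_of_lt (by linarith) (by norm_num : (0:ℝ) < 2)).const_mul C2
    · exact hmeasf.aestronglyMeasurable.restrict
    · filter_upwards [ae_restrict_mem measurableSet_Ioi] with σ hσ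
      have hσ2 : 2 ≤ σ := le_of_lt hσ
      have hσ1 : 1 < σ := by linarith
      have hσ0 : 0 < σ := by linarith
      rw [Real.norm_eq_abs, abs_of_nonneg (hfpos σ hσ1).le]
      have hK : sphericalKernel N s σ ≤ pref * (π * 4^p * σ^(-((N:ℝ)+2*s))) := by
        rw [hker]
        exact mul_le_mul_of_nonneg_left (SKaux.Kint_le_far hN2 hs0 hσ2) hpref0.le
      have hX0 : 0 ≤ σ^θ - 1 := by
        have := (Real.one_lt_rpow_iff_of_pos hσ0).mpr (Or.inl ⟨hσ1, hθ0⟩)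
        linarith
      have hY0 : 0 ≤ σ^a - σ^b := by
        have := (Real.rpow_lt_rpow_left_iff hσ1).mpr hba
        linarith
      have hXle : σ^θ - 1 ≤ σ^θ := by linarith
      have hYle : σ^a - σ^b ≤ σ^a := by
        have : 0 < σ^b := Real.rpow_pos_of_pos hσ0 b
        linarith
      have hR1 : 0 ≤ pref * (π * 4^p * σ^(-((N:ℝ)+2*s))) :=
        mul_nonneg hpref0.le (mul_nonneg (mul_nonneg Real.pi_pos.le
          (Real.rpow_nonneg (by norm_num) _)) (Real.rpow_nonneg hσ0.le _))
      calc f σ = sphericalKernel N s σ * (σ^θ-1) * (σ^a - σ^b) := rfl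
        _ ≤ (pref * (π*4^p*σ^(-((N:ℝ)+2*s)))) * σ^θ * σ^a := by
            apply mul_le_mul _ hYle hY0 (mul_nonneg hR1 (Real.rpow_nonneg hσ0.le _))
            exact mul_le_mul hK hXle hX0 hR1
        _ = C2 * (σ^(-((N:ℝ)+2*s)) * σ^θ * σ^a) := by rw [hC2]; ring
        _ = C2 * σ^(-(1+2*s+γ)) := by
            rw [← Real.rpow_add hσ0, ← Real.rpow_add hσ0]
            congr 1
            rw [ha]; ring
  have hIoi : Set.Ioc (1:ℝ) 2 ∪ Set.Ioi (2:ℝ) = Set.Ioi (1:ℝ) :=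
    Set.Ioc_union_Ioi_eq_Ioi one_le_two
  have hint : IntegrableOn f (Set.Ioi (1:ℝ)) := by
    rw [← hIoi]; exact hnear.union hfar
  have hnn : 0 ≤ᵐ[volume.restrict (Set.Ioi (1:ℝ))] f := by
    filter_upwards [ae_restrict_mem measurableSet_Ioi] with σ hσ
    exact (hfpos σ hσ).le
  refine ⟨hint, ?_⟩
  rw [setIntegral_pos_iff_support_of_nonneg_ae hnn hint]
  refine lt_of_lt_of_le ?_ (measure_mono (fun x hx => ⟨(hfpos x hx).ne', hx⟩))
  rw [Real.volume_Ioi]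
  exact ENNReal.zero_lt_top

end
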